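/- For the scalar Riccati terminal value problem a'(t) = â² − a(t)², a(T) = −c, with â > 0 and c ≥ 0, the solution is a(t) = â − ( (1/(2â))(1 − e^{−2â(T−t)}) + e^{−2â(T−t)}/(c+â) )⁻¹, it exists on all of (−∞, T], and satisfies −max(c, â) ≤ a(t) ≤ â for all t ≤ T. -/

import Mathlib

/-!
With `u := (â - a)⁻¹` the Riccati equation `a' = â² - a²` becomes the linear equation
`u' = 2âu - 1`, whose solution with `u(T) = (c + â)⁻¹` is
`u(t) = (1 - w)/(2â) + w/(c + â)` for the weight `w = e^{-2â(T-t)}`. For `t ≤ T` the weight lies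
in `(0, 1]`, so `u(t)` is a convex combination of `(2â)⁻¹` and `(c + â)⁻¹`; hence
`(â + max(c, â))⁻¹ ≤ u(t)`, which gives both the global existence and the two bounds on
`a = â - u⁻¹`.
-/

open Real

/-- The scalar Riccati solution
`a(t) = â − ((1/(2â))(1 − e^{−2â(T−t)}) + e^{−2â(T−t)}/(c+â))⁻¹`. -/
noncomputable def scalarRiccatiSol (T ahat c : ℝ) (t : ℝ) : ℝ :=
  ahat - ((1 / (2 * ahat)) * (1 - Real.exp (-(2 * ahat * (T - t))))
    + Real.exp (-(2 * ahat * (T - t))) / (c + ahat))⁻¹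

theorem hasDerivAt_sub_inv_of_hasDerivAt_linear {u : ℝ → ℝ} {k t : ℝ}
    (hu : HasDerivAt u (2 * k * u t - 1) t) (hut : u t ≠ 0) :
    HasDerivAt (fun s => k - (u s)⁻¹) (k ^ 2 - (k - (u t)⁻¹) ^ 2) t :=
  ((hu.inv hut).const_sub k).congr_deriv (by field_simp; ring)

noncomputable def scalarRiccatiDenom (T ahat c t : ℝ) : ℝ :=
  (1 / (2 * ahat)) * (1 - exp (-(2 * ahat * (T - t)))) + exp (-(2 * ahat * (T - t))) / (c + ahat)

theorem scalarRiccatiSol_eq (T ahat c t : ℝ) :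
    scalarRiccatiSol T ahat c t = ahat - (scalarRiccatiDenom T ahat c t)⁻¹ := rfl

theorem hasDerivAt_scalarRiccatiDenom {ahat : ℝ} (hahat : ahat ≠ 0) (T c t : ℝ) :
    HasDerivAt (scalarRiccatiDenom T ahat c)
      (2 * ahat * scalarRiccatiDenom T ahat c t - 1) t := by
  have hexponent : HasDerivAt (fun s : ℝ => -(2 * ahat * (T - s))) (2 * ahat) t :=
    (((hasDerivAt_id t).const_sub T).const_mul (2 * ahat)).fun_neg.congr_deriv (by ring)
  have hweight := hexponent.exp
  refine (((hweight.const_sub 1).const_mul (1 / (2 * ahat))).add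
    (hweight.div_const (c + ahat))).congr_deriv ?_
  rw [scalarRiccatiDenom]
  field_simp
  ring

theorem scalarRiccatiDenom_self (T ahat c : ℝ) :
    scalarRiccatiDenom T ahat c T = (c + ahat)⁻¹ := by
  simp [scalarRiccatiDenom]

theorem inv_add_max_le_scalarRiccatiDenom {T ahat c t : ℝ} (hahat : 0 < ahat) (hc : 0 ≤ c)
    (ht : t ≤ T) : (ahat + max c ahat)⁻¹ ≤ scalarRiccatiDenom T ahat c t := by
  set w := exp (-(2 * ahat * (T - t)))
  have hw0 : 0 ≤ w := (exp_pos _).le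
  have hw1 : w ≤ 1 := exp_le_one_iff.mpr (by nlinarith)
  have hp : (ahat + max c ahat)⁻¹ ≤ 1 / (2 * ahat) := by
    rw [one_div]
    exact inv_anti₀ (by positivity) (by linarith [le_max_right c ahat])
  have hq : (ahat + max c ahat)⁻¹ ≤ (c + ahat)⁻¹ :=
    inv_anti₀ (by positivity) (by linarith [le_max_left c ahat])
  calc (ahat + max c ahat)⁻¹
      = (ahat + max c ahat)⁻¹ * (1 - w) + w * (ahat + max c ahat)⁻¹ := by ring
    _ ≤ 1 / (2 * ahat) * (1 - w) + w * (c + ahat)⁻¹ := by gcongr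
    _ = scalarRiccatiDenom T ahat c t := by simp only [scalarRiccatiDenom, w]; ring

/-- For `â > 0` and `c ≥ 0`, the scalar Riccati terminal value problem
`a'(t) = â² − a(t)²`, `a(T) = −c` is solved on all of `(−∞, T]` by `scalarRiccatiSol`,
which satisfies the bounds `−max(c, â) ≤ a(t) ≤ â`. -/
theorem scalar_riccati (T ahat c : ℝ) (hahat : 0 < ahat) (hc : 0 ≤ c) :
    (∀ t ≤ T, HasDerivAt (scalarRiccatiSol T ahat c)
        (ahat ^ 2 - scalarRiccatiSol T ahat c t ^ 2) t) ∧
    scalarRiccatiSol T ahat c T = -c ∧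
    ∀ t ≤ T, -max c ahat ≤ scalarRiccatiSol T ahat c t ∧ scalarRiccatiSol T ahat c t ≤ ahat := by
  have hlower (t : ℝ) (ht : t ≤ T) := inv_add_max_le_scalarRiccatiDenom hahat hc ht
  have hpos (t : ℝ) (ht : t ≤ T) : 0 < scalarRiccatiDenom T ahat c t :=
    lt_of_lt_of_le (by positivity) (hlower t ht)
  refine ⟨fun t ht => ?_, ?_, fun t ht => ⟨?_, ?_⟩⟩
  · exact hasDerivAt_sub_inv_of_hasDerivAt_linear
      (hasDerivAt_scalarRiccatiDenom hahat.ne' T c t) (hpos t ht).ne'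
  · rw [scalarRiccatiSol_eq, scalarRiccatiDenom_self, inv_inv]
    ring
  · have hinv := (inv_le_comm₀ (hpos t ht) (by positivity)).mpr (hlower t ht)
    rw [scalarRiccatiSol_eq]
    linarith
  · rw [scalarRiccatiSol_eq]
    linarith [inv_pos.mpr (hpos t ht)]
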